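/- Let s ∈ ℝ², γ > 0, M ≥ 0, T > 0, and let Γ ⊆ ℝ² be a Borel set with μH¹(Γ) < ∞, where μH¹ is the 1-dimensional Hausdorff measure on ℝ². Let G : ℝ × ℝ² → ℝ be measurable with |G(t,x)| ≤ M · ‖x − s‖^{1+γ} for all t ∈ (0,T) and all x with ‖x − s‖ < 1, and let ψ : ℝ² → ℝ be measurable with |ψ| ≤ 1. For 0 < ε ≤ 1/2 consider I(ε) := ∫_{t∈(0,T)} ∫_{x∈Γ} |G(t,x)|² · |ψ(x)|² · ‖Dχ_{ε,s}(x)‖² · 1_{{ε² < ‖x−s‖ < ε}}(x) dμH¹(x) dt. Then I(ε) ≤ (8M/e)² · ε^{2γ} · T · μH¹(Γ), and in particular I(ε) → 0 as ε → 0⁺. (This is fact (C) in the proof of the main theorem: the term ‖G ψ₁^ε ∇_x χ_ε‖_{L²((0,T)×Γ_d)} tends to zero.) -/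

import Mathlib

open MeasureTheory

/-- The plane ℝ² with the Euclidean norm. -/
abbrev E2 : Type := EuclideanSpace ℝ (Fin 2)

/-- The truncating (cutoff) function `χ_{ε,s}` of the paper. -/
noncomputable def chiCut (s : E2) (ε : ℝ) (x : E2) : ℝ :=
  if ‖x - s‖ ≤ ε ^ 2 then 0
  else if ‖x - s‖ < ε then Real.exp ((ε - ‖x - s‖) / (ε ^ 2 - ‖x - s‖))
  else 1

/-- The quantity
`I(ε) = ∫_{t∈(0,T)} ∫_{x∈Γ} |G(t,x)|² |ψ(x)|² ‖Dχ_{ε,s}(x)‖² 1_{ε² < ‖x-s‖ < ε}(x) dμH¹ dt`,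
where `μH¹` is the 1-dimensional Hausdorff measure on ℝ². -/
noncomputable def Ieps (s : E2) (T : ℝ) (Γ : Set E2) (G : ℝ × E2 → ℝ) (ψ : E2 → ℝ)
    (ε : ℝ) : ENNReal :=
  ∫⁻ t in Set.Ioo (0 : ℝ) T, ∫⁻ x in Γ,
    ENNReal.ofReal (|G (t, x)| ^ 2 * |ψ x| ^ 2 * ‖fderiv ℝ (chiCut s ε) x‖ ^ 2 *
      Set.indicator {y : E2 | ε ^ 2 < ‖y - s‖ ∧ ‖y - s‖ < ε} (fun _ => (1 : ℝ)) x)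
    ∂(μH[1]) ∂(volume)

/-!
On the annulus `ε² < r = ‖x - s‖ < ε` the cutoff is `φ ∘ ‖· - s‖` with
`φ r = exp ((ε - r) / (ε² - r))`, and `‖· - s‖` is 1-Lipschitz, so `‖Dχ‖ ≤ φ' r`.
Writing `d = r - ε²` and `u = (ε - r) / d`, one gets `φ' r = e^{-u} (u + 1)² / (ε - ε²)`,
and `(u + 1) / 2 ≤ e^{(u - 1) / 2}` bounds this by `4 / (e (ε - ε²)) ≤ 8 / (e ε)`.
Since also `|G| ≤ M ε^{1+γ}` there, the integrand is at most `(8M/e)² ε^{2γ}`.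
-/

open Real Filter Topology Set

lemma exp_neg_mul_add_one_sq_le {u : ℝ} (hu : -1 ≤ u) : exp (-u) * (u + 1) ^ 2 ≤ 4 / exp 1 := by
  have hhalf : (u + 1) / 2 ≤ exp ((u - 1) / 2) := by
    linarith [add_one_le_exp ((u - 1) / 2)]
  calc exp (-u) * (u + 1) ^ 2 = 4 * exp (-u) * ((u + 1) / 2) ^ 2 := by ring
    _ ≤ 4 * exp (-u) * exp ((u - 1) / 2) ^ 2 := by gcongr; linarith
    _ = 4 / exp 1 := by
      rw [sq, ← exp_add, mul_assoc, ← exp_add, show -u + ((u - 1) / 2 + (u - 1) / 2) = -1 by ring,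
        exp_neg, div_eq_mul_inv]

lemma exp_neg_div_mul_add_div_sq_le {b d : ℝ} (hb : 0 ≤ b) (hd : 0 < d) :
    exp (-(b / d)) * ((b + d) / d ^ 2) ≤ 4 / (exp 1 * (b + d)) := by
  have hbd : 0 < b + d := by linarith
  have key := exp_neg_mul_add_one_sq_le (u := b / d) (by linarith [div_nonneg hb hd.le])
  calc exp (-(b / d)) * ((b + d) / d ^ 2) = exp (-(b / d)) * (b / d + 1) ^ 2 / (b + d) := by
        field_simp
    _ ≤ 4 / exp 1 / (b + d) := by gcongr
    _ = 4 / (exp 1 * (b + d)) := by rw [div_div]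

section Cutoff

variable {s x : E2} {ε : ℝ}

lemma chiCut_eventuallyEq (hx₁ : ε ^ 2 < ‖x - s‖) (hx₂ : ‖x - s‖ < ε) :
    chiCut s ε =ᶠ[𝓝 x] fun y => exp ((ε - ‖y - s‖) / (ε ^ 2 - ‖y - s‖)) := by
  have hcont : ContinuousAt (fun y : E2 => ‖y - s‖) x := by fun_prop
  filter_upwards [hcont.eventually (Ioo_mem_nhds hx₁ hx₂)] with y hy
  simp only [chiCut, if_neg (not_le.2 hy.1), if_pos hy.2]

lemma hasFDerivAt_chiCut (hx₁ : ε ^ 2 < ‖x - s‖) (hx₂ : ‖x - s‖ < ε) :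
    HasFDerivAt (chiCut s ε)
      ((exp ((ε - ‖x - s‖) / (ε ^ 2 - ‖x - s‖)) * ((ε - ε ^ 2) / (ε ^ 2 - ‖x - s‖) ^ 2)) •
        fderiv ℝ (fun y => ‖y - s‖) x) x := by
  have hxs : x - s ≠ 0 := fun h => by
    rw [h, norm_zero] at hx₁
    linarith [sq_nonneg ε]
  have hquot : HasDerivAt (fun r : ℝ => (ε - r) / (ε ^ 2 - r))
      ((ε - ε ^ 2) / (ε ^ 2 - ‖x - s‖) ^ 2) ‖x - s‖ := by
    refine (((hasDerivAt_id _).const_sub ε).div ((hasDerivAt_id _).const_sub (ε ^ 2))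
      (sub_ne_zero.2 hx₁.ne)).congr_deriv ?_
    simp only [id]
    ring
  have hnorm : HasFDerivAt (fun y : E2 => ‖y - s‖) (fderiv ℝ (fun y => ‖y - s‖) x) x :=
    (DifferentiableAt.norm ℝ (differentiableAt_id.sub_const s) hxs).hasFDerivAt
  have hcomp := hquot.exp.comp_hasFDerivAt x hnorm
  exact hcomp.congr_of_eventuallyEq (chiCut_eventuallyEq hx₁ hx₂)

lemma norm_fderiv_chiCut_le (hε : ε ≤ 1 / 2) (hx₁ : ε ^ 2 < ‖x - s‖) (hx₂ : ‖x - s‖ < ε) :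
    ‖fderiv ℝ (chiCut s ε) x‖ ≤ 8 / (exp 1 * ε) := by
  have hε₀ : 0 < ε := by nlinarith [norm_nonneg (x - s)]
  have hdist : ‖fderiv ℝ (fun y : E2 => ‖y - s‖) x‖ ≤ 1 := by
    simpa [dist_eq_norm] using norm_fderiv_le_of_lipschitz ℝ (LipschitzWith.dist_left s) (x₀ := x)
  have hrate := exp_neg_div_mul_add_div_sq_le (b := ε - ‖x - s‖) (d := ‖x - s‖ - ε ^ 2)
    (by linarith) (by linarith)
  rw [show ε - ‖x - s‖ + (‖x - s‖ - ε ^ 2) = ε - ε ^ 2 by ring] at hrate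
  have hexponent : (ε - ‖x - s‖) / (ε ^ 2 - ‖x - s‖) = -((ε - ‖x - s‖) / (‖x - s‖ - ε ^ 2)) := by
    rw [← div_neg, neg_sub]
  have hεε : 0 < ε - ε ^ 2 := by nlinarith
  rw [(hasFDerivAt_chiCut hx₁ hx₂).fderiv, norm_smul,
    Real.norm_of_nonneg (mul_nonneg (exp_pos _).le (div_nonneg hεε.le (sq_nonneg _)))]
  calc _ ≤ exp ((ε - ‖x - s‖) / (ε ^ 2 - ‖x - s‖)) * ((ε - ε ^ 2) / (ε ^ 2 - ‖x - s‖) ^ 2) * 1 := by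
        gcongr
    _ ≤ 4 / (exp 1 * (ε - ε ^ 2)) := by
        rwa [mul_one, hexponent, show (ε ^ 2 - ‖x - s‖) ^ 2 = (‖x - s‖ - ε ^ 2) ^ 2 by ring]
    _ ≤ 8 / (exp 1 * ε) := by
        rw [div_le_div_iff₀ (by positivity) (by positivity)]
        nlinarith [mul_pos (exp_pos 1) hε₀]

lemma sq_mul_sq_mul_norm_fderiv_chiCut_sq_le {M γ g p : ℝ} (hε : ε ≤ 1 / 2)
    (hx₁ : ε ^ 2 < ‖x - s‖) (hx₂ : ‖x - s‖ < ε) (hg : |g| ≤ M * ε ^ (1 + γ)) (hp : |p| ≤ 1) :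
    |g| ^ 2 * |p| ^ 2 * ‖fderiv ℝ (chiCut s ε) x‖ ^ 2 ≤ (8 * M / exp 1) ^ 2 * ε ^ (2 * γ) := by
  have hε₀ : 0 < ε := by nlinarith [norm_nonneg (x - s)]
  calc |g| ^ 2 * |p| ^ 2 * ‖fderiv ℝ (chiCut s ε) x‖ ^ 2
      ≤ (M * ε ^ (1 + γ)) ^ 2 * 1 ^ 2 * (8 / (exp 1 * ε)) ^ 2 := by
        gcongr
        exact norm_fderiv_chiCut_le hε hx₁ hx₂
    _ = (8 * M / exp 1) ^ 2 * ε ^ (2 * γ) := by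
        rw [rpow_add hε₀, rpow_one, mul_comm 2 γ, rpow_mul hε₀.le, rpow_two]
        field_simp

end Cutoff

lemma setLIntegral_Ioo_setLIntegral_ofReal_le {α : Type*} [MeasurableSpace α] (μ : Measure α)
    (Γ : Set α) {T C : ℝ} (hC : 0 ≤ C) {f : ℝ → α → ℝ} (hf : ∀ t ∈ Ioo 0 T, ∀ x, f t x ≤ C) :
    ∫⁻ t in Ioo 0 T, ∫⁻ x in Γ, ENNReal.ofReal (f t x) ∂μ ≤ ENNReal.ofReal (C * T) * μ Γ := by
  calc ∫⁻ t in Ioo 0 T, ∫⁻ x in Γ, ENNReal.ofReal (f t x) ∂μ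
      ≤ ∫⁻ _ in Ioo 0 T, ∫⁻ _ in Γ, ENNReal.ofReal C ∂μ :=
        setLIntegral_mono' measurableSet_Ioo fun t ht =>
          lintegral_mono fun x => ENNReal.ofReal_le_ofReal (hf t ht x)
    _ = ENNReal.ofReal (C * T) * μ Γ := by
        rw [setLIntegral_const, setLIntegral_const, Real.volume_Ioo, sub_zero,
          ENNReal.ofReal_mul hC, mul_right_comm]

theorem Ieps_le {s : E2} {γ M T ε : ℝ} {Γ : Set E2} {G : ℝ × E2 → ℝ} {ψ : E2 → ℝ}
    (hγ : 0 < γ) (hM : 0 ≤ M)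
    (hG : ∀ t ∈ Ioo (0 : ℝ) T, ∀ x : E2, ‖x - s‖ < 1 → |G (t, x)| ≤ M * ‖x - s‖ ^ (1 + γ))
    (hψ : ∀ x : E2, |ψ x| ≤ 1) (hε₀ : 0 < ε) (hε : ε ≤ 1 / 2) :
    Ieps s T Γ G ψ ε ≤ ENNReal.ofReal ((8 * M / exp 1) ^ 2 * ε ^ (2 * γ) * T) * μH[1] Γ := by
  refine setLIntegral_Ioo_setLIntegral_ofReal_le _ _ (by positivity) fun t ht x => ?_
  by_cases hx : x ∈ {y : E2 | ε ^ 2 < ‖y - s‖ ∧ ‖y - s‖ < ε}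
  · rw [indicator_of_mem hx, mul_one]
    obtain ⟨hx₁, hx₂⟩ := hx
    refine sq_mul_sq_mul_norm_fderiv_chiCut_sq_le hε hx₁ hx₂ ?_ (hψ x)
    refine (hG t ht x (by linarith)).trans ?_
    gcongr
  · rw [indicator_of_notMem hx, mul_zero]
    positivity

lemma tendsto_ofReal_mul_rpow_mul_mul_nhdsGT_zero {p : ℝ} (hp : 0 < p) (a b : ℝ) {m : ENNReal}
    (hm : m ≠ ⊤) : Tendsto (fun ε : ℝ => ENNReal.ofReal (a * ε ^ p * b) * m) (𝓝[>] 0) (𝓝 0) := by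
  have hreal : Tendsto (fun ε : ℝ => a * ε ^ p * b) (𝓝[>] 0) (𝓝 0) := by
    simpa using ((tendsto_nhdsWithin_of_tendsto_nhds tendsto_id).rpow_const_nhds_zero hp
      |>.const_mul a).mul_const b
  simpa using ENNReal.Tendsto.mul_const (ENNReal.tendsto_ofReal hreal) (Or.inr hm)

theorem Ieps_bound_and_tendsto_zero_general (s : E2) (γ M T : ℝ) (hγ : 0 < γ) (hM : 0 ≤ M)
    (Γ : Set E2) (hΓfin : μH[1] Γ < ⊤)
    (G : ℝ × E2 → ℝ)
    (hG : ∀ t ∈ Set.Ioo (0 : ℝ) T, ∀ x : E2, ‖x - s‖ < 1 →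
      |G (t, x)| ≤ M * ‖x - s‖ ^ (1 + γ))
    (ψ : E2 → ℝ) (hψ : ∀ x : E2, |ψ x| ≤ 1) :
    (∀ ε : ℝ, 0 < ε → ε ≤ 1 / 2 →
      Ieps s T Γ G ψ ε ≤
        ENNReal.ofReal ((8 * M / Real.exp 1) ^ 2 * ε ^ (2 * γ) * T) * μH[1] Γ) ∧
    Filter.Tendsto (Ieps s T Γ G ψ) (nhdsWithin 0 (Set.Ioi 0)) (nhds 0) := by
  have hbound (ε : ℝ) (hε₀ : 0 < ε) (hε : ε ≤ 1 / 2) :=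
    Ieps_le (Γ := Γ) (T := T) hγ hM hG hψ hε₀ hε
  refine ⟨hbound, tendsto_of_tendsto_of_tendsto_of_le_of_le' tendsto_const_nhds
    (tendsto_ofReal_mul_rpow_mul_mul_nhdsGT_zero (p := 2 * γ) (by positivity) ((8 * M / exp 1) ^ 2) T
      hΓfin.ne)
    (.of_forall fun _ => zero_le) ?_⟩
  filter_upwards [Ioc_mem_nhdsGT (by norm_num : (0 : ℝ) < 1 / 2)] with ε hε
  exact hbound ε hε.1 hε.2

/-- fact (C) in the proof of the main theorem: under the domination
condition `|G(t,x)| ≤ M ‖x - s‖^{1+γ}` near `s` and `|ψ| ≤ 1`, for every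
`0 < ε ≤ 1/2` one has `I(ε) ≤ (8M/e)² ε^{2γ} T μH¹(Γ)`, and `I(ε) → 0` as `ε → 0⁺`. -/
theorem Ieps_bound_and_tendsto_zero (s : E2) (γ M T : ℝ) (hγ : 0 < γ) (hM : 0 ≤ M)
    (hT : 0 < T) (Γ : Set E2) (hΓ : MeasurableSet Γ) (hΓfin : μH[1] Γ < ⊤)
    (G : ℝ × E2 → ℝ) (hGmeas : Measurable G)
    (hG : ∀ t ∈ Set.Ioo (0 : ℝ) T, ∀ x : E2, ‖x - s‖ < 1 →
      |G (t, x)| ≤ M * ‖x - s‖ ^ (1 + γ))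
    (ψ : E2 → ℝ) (hψmeas : Measurable ψ) (hψ : ∀ x : E2, |ψ x| ≤ 1) :
    (∀ ε : ℝ, 0 < ε → ε ≤ 1 / 2 →
      Ieps s T Γ G ψ ε ≤
        ENNReal.ofReal ((8 * M / Real.exp 1) ^ 2 * ε ^ (2 * γ) * T) * μH[1] Γ) ∧
    Filter.Tendsto (Ieps s T Γ G ψ) (nhdsWithin 0 (Set.Ioi 0)) (nhds 0) :=
  Ieps_bound_and_tendsto_zero_general s γ M T hγ hM Γ hΓfin G hG ψ hψ
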